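/- arXiv:1111.1543 — 2 statements merged into one kernel-verified Lean document; each statement's English description precedes it below -/
import Mathlib

section
/- Let p be a prime and f, g ∈ F_p[X] polynomials of degrees n and m respectively with m ≥ 1, n ≥ 1 and m not dividing n. Suppose x_1, ..., x_n ∈ F_p are pairwise distinct and nonzero, and y_1, ..., y_n ∈ F_p are arbitrary. Then the number of pairs (x, y) ∈ F_p × F_p satisfying f(x) = g(y) together with the vanishing of the (n+1)×(n+1) determinant whose first row is (x^n, x^{n−1}, ..., x, y) and whose remaining rows are (x_i^n, x_i^{n−1}, ..., x_i, y_i) for i = 1, ..., n, is at most m·n. -/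
/-!
Expanding the determinant along its first row shows that it equals `c * y - P(x)` with
`deg P ≤ n`, where the cofactor `c` of `y` is, up to sign, `x₁ ⋯ xₙ` times a Vandermonde
determinant, hence nonzero. So the determinant vanishes exactly on the graph `y = Q(x)` of
`Q = P / c`, and the solutions correspond to the roots of `f - g ∘ Q`. This polynomial has degree
at most `m n`, and it is nonzero because `deg (g ∘ Q) = m · deg Q` is a multiple of `m` while
`deg f = n` is not.
-/

open Polynomial Matrix

section Interpolation

variable {R : Type*} [CommRing R] {n : ℕ}

/-- First row `(aⁿ, …, a, b)`, row `i + 1` equal to `(x iⁿ, …, x i, y i)`. -/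
def interpolationMatrix (hn : 1 ≤ n) (x y : Fin n → R) (a b : R) :
    Matrix (Fin (n + 1)) (Fin (n + 1)) R :=
  Matrix.of fun i j : Fin (n + 1) =>
    if (j : ℕ) = n then
      (if (i : ℕ) = 0 then b else y ⟨(i : ℕ) - 1, by have := i.isLt; omega⟩)
    else
      (if (i : ℕ) = 0 then a else x ⟨(i : ℕ) - 1, by have := i.isLt; omega⟩)
        ^ (n - (j : ℕ))

theorem interpolationMatrix_submatrix_succ (hn : 1 ≤ n) (x y : Fin n → R) (a b a' b' : R)
    (σ : Fin n → Fin (n + 1)) :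
    (interpolationMatrix hn x y a b).submatrix Fin.succ σ =
      (interpolationMatrix hn x y a' b').submatrix Fin.succ σ := by
  ext i k
  simp [interpolationMatrix]

theorem interpolationMatrix_submatrix_succ_castSucc (hn : 1 ≤ n) (x y : Fin n → R) (a b : R) :
    (interpolationMatrix hn x y a b).submatrix Fin.succ Fin.castSucc =
      Matrix.of fun i k : Fin n => x i ^ (n - (k : ℕ)) := by
  ext i k
  simp [interpolationMatrix, k.isLt.ne]

theorem exists_det_interpolationMatrix_eq (hn : 1 ≤ n) (x y : Fin n → R) :
    ∃ P : R[X], P.natDegree ≤ n ∧ ∀ a b : R, (interpolationMatrix hn x y a b).det =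
      (-1) ^ n * (Matrix.of fun i k : Fin n => x i ^ (n - (k : ℕ))).det * b + P.eval a := by
  let minor (j : Fin n) : R :=
    ((interpolationMatrix hn x y 0 0).submatrix Fin.succ j.castSucc.succAbove).det
  refine ⟨∑ j : Fin n, C ((-1) ^ (j : ℕ) * minor j) * X ^ (n - (j : ℕ)), ?_,
    fun a b => ?_⟩
  · refine natDegree_sum_le_of_forall_le _ _ fun j _ => (natDegree_C_mul_le _ _).trans ?_
    exact (natDegree_X_pow_le _).trans (Nat.sub_le _ _)
  rw [det_succ_row_zero, Fin.sum_univ_castSucc, Fin.succAbove_last,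
    interpolationMatrix_submatrix_succ_castSucc, eval_finsetSum, add_comm]
  congr 1
  · simp only [interpolationMatrix, of_apply, Fin.val_last, Fin.val_eq_zero_iff, ite_pow,
      ↓reduceIte]
    ring
  · refine Finset.sum_congr rfl fun j _ => ?_
    rw [interpolationMatrix_submatrix_succ hn x y a b 0 0]
    simp only [interpolationMatrix, minor, of_apply, Fin.val_castSucc, Fin.val_eq_zero_iff,
      ite_pow, j.isLt.ne, ↓reduceIte, eval_mul, eval_pow, eval_C, eval_X]
    ring

end Interpolation

theorem det_pow_sub_ne_zero {R : Type*} [CommRing R] [IsDomain R] {n : ℕ} {x : Fin n → R}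
    (hx : Function.Injective x) (h0 : ∀ i, x i ≠ 0) :
    (Matrix.of fun i k : Fin n => x i ^ (n - (k : ℕ))).det ≠ 0 := by
  have hfactor : (Matrix.of fun i k : Fin n => x i ^ (n - (k : ℕ))) =
      Matrix.of fun i k => x i * (vandermonde x).submatrix id Fin.revPerm i k := by
    ext i k
    simp only [of_apply, submatrix_apply, vandermonde_apply, id, Fin.revPerm_apply, Fin.val_rev,
      ← pow_succ']
    congr 1
    omega
  rw [hfactor, det_mul_column, det_permute']
  refine mul_ne_zero (Finset.prod_ne_zero_iff.mpr fun i _ => h0 i) (mul_ne_zero ?_ ?_)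
  · rcases Int.units_eq_one_or (Equiv.Perm.sign (Fin.revPerm : Equiv.Perm (Fin n))) with h | h <;>
      simp [h]
  · exact det_vandermonde_ne_zero_iff.mpr hx

theorem exists_det_interpolationMatrix_eq_mul_sub {K : Type*} [Field K] {n : ℕ}
    (hn : 1 ≤ n) {x : Fin n → K} (hx : Function.Injective x) (h0 : ∀ i, x i ≠ 0)
    (y : Fin n → K) :
    ∃ c ≠ 0, ∃ Q : K[X], Q.natDegree ≤ n ∧
      ∀ a b : K, (interpolationMatrix hn x y a b).det = c * (b - Q.eval a) := by
  obtain ⟨P, hP, hdet⟩ := exists_det_interpolationMatrix_eq hn x y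
  set c := (-1) ^ n * (Matrix.of fun i k : Fin n => x i ^ (n - (k : ℕ))).det
  have hc : c ≠ 0 := mul_ne_zero (pow_ne_zero _ (neg_ne_zero.mpr one_ne_zero))
    (det_pow_sub_ne_zero hx h0)
  refine ⟨c, hc, C (-c⁻¹) * P, (natDegree_C_mul_le _ _).trans hP, fun a b => ?_⟩
  rw [hdet, eval_C_mul]
  field_simp
  ring

theorem Polynomial.ne_comp_of_not_dvd_natDegree {R : Type*} [CommRing R] [NoZeroDivisors R]
    {f g : R[X]} (Q : R[X]) (h : ¬ g.natDegree ∣ f.natDegree) : f ≠ g.comp Q :=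
  fun hf => h ⟨Q.natDegree, by rw [hf, natDegree_comp]⟩

theorem ncard_setOf_eval_eq_eval_graph_le {R : Type*} [CommRing R] [IsDomain R]
    {f g : R[X]} (Q : R[X]) (h : ¬ g.natDegree ∣ f.natDegree) :
    {ab : R × R | f.eval ab.1 = g.eval ab.2 ∧ ab.2 = Q.eval ab.1}.ncard ≤
      max f.natDegree (g.natDegree * Q.natDegree) := by
  have hne : f - g.comp Q ≠ 0 := sub_ne_zero.mpr (ne_comp_of_not_dvd_natDegree Q h)
  calc _ ≤ ((f - g.comp Q).rootSet R).ncard := by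
        refine Set.ncard_le_ncard_of_injOn Prod.fst ?_ ?_ (rootSet_finite _ R)
        · rintro ⟨a, b⟩ ⟨hfg, hb⟩
          simp_all [mem_rootSet]
        · rintro ⟨a, b⟩ ⟨-, hb⟩ ⟨a', b'⟩ ⟨-, hb'⟩ (rfl : a = a')
          simp_all
    _ ≤ (f - g.comp Q).natDegree := ncard_rootSet_le _ R
    _ ≤ max f.natDegree (g.natDegree * Q.natDegree) := by
        rw [← natDegree_comp]
        exact natDegree_sub_le _ _

theorem stmt_1 (p : ℕ) (hp : p.Prime) (n m : ℕ) (hn : 1 ≤ n) (hm : 1 ≤ m)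
    (hndvd : ¬ m ∣ n) (f g : Polynomial (ZMod p))
    (hf : f.natDegree = n) (hg : g.natDegree = m)
    (x y : Fin n → ZMod p)
    (hdist : ∀ i j : Fin n, i ≠ j → x i ≠ x j)
    (hnz : ∀ i : Fin n, x i ≠ 0) :
    {ab : ZMod p × ZMod p |
      f.eval ab.1 = g.eval ab.2 ∧
      (Matrix.of fun i j : Fin (n + 1) =>
        if (j : ℕ) = n then
          (if (i : ℕ) = 0 then ab.2 else y ⟨(i : ℕ) - 1, by have := i.isLt; omega⟩)
        else
          (if (i : ℕ) = 0 then ab.1 else x ⟨(i : ℕ) - 1, by have := i.isLt; omega⟩)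
            ^ (n - (j : ℕ))).det = 0}.ncard ≤ m * n := by
  have := Fact.mk hp
  have hx : Function.Injective x := fun i j hij => by_contra fun hne => hdist i j hne hij
  obtain ⟨c, hc, Q, hQ, hdet⟩ := exists_det_interpolationMatrix_eq_mul_sub hn hx hnz y
  calc _ ≤ {ab : ZMod p × ZMod p | f.eval ab.1 = g.eval ab.2 ∧ ab.2 = Q.eval ab.1}.ncard := by
        refine Set.ncard_le_ncard fun ab ⟨hfg, hzero⟩ => ⟨hfg, ?_⟩
        change (interpolationMatrix hn x y ab.1 ab.2).det = 0 at hzero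
        rwa [hdet, mul_eq_zero, or_iff_right hc, sub_eq_zero] at hzero
    _ ≤ max f.natDegree (g.natDegree * Q.natDegree) :=
        ncard_setOf_eval_eq_eval_graph_le Q (by rwa [hf, hg])
    _ ≤ m * n := by
        rw [hf, hg]
        exact max_le (Nat.le_mul_of_pos_left n hm) (Nat.mul_le_mul_left m hQ)
end

section
/- Let p be a prime, r, s integers with 1 ≤ |r|, s ≤ p^{1/2} and gcd(r,s) = 1, and c an integer. The number of pairs (x, y) with 1 ≤ x, y ≤ M < p satisfying s·x − r·y ≡ c (mod p) is at most (1 + 2M/max{|r|, s}) · (1 + 2M(s + |r|)/p). -/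
open Finset

/-!
Group the solutions by the value `v = s x - r y`. Since `|v| ≤ (s + |r|) M` and `v ≡ c (mod p)`,
at most `1 + 2M(s + |r|)/p` values occur. Two solutions with the same `v` satisfy
`s (x - x') = r (y - y')`, so by coprimality `r ∣ x - x'` and `s ∣ y - y'`; moreover either
coordinate determines the other. Projecting a fibre to the coordinate whose modulus is `max (|r|, s)` embeds it
into a residue class of `[1, M]`, which has at most `1 + (M - 1)/max (|r|, s)` elements.
-/

theorem Finset.card_le_mul_of_card_fiber_le {α β R : Type*} [DecidableEq β] [Semiring R]
    [PartialOrder R] [IsOrderedRing R] {f : α → β} (s : Finset α) {m n : R} (hm₀ : 0 ≤ m)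
    (hm : ∀ b ∈ s.image f, (#{a ∈ s | f a = b} : R) ≤ m) (hn : (#(s.image f) : R) ≤ n) :
    (#s : R) ≤ m * n :=
  calc (#s : R) = ∑ b ∈ s.image f, (#{a ∈ s | f a = b} : R) := by
        rw [card_eq_sum_card_image f s, Nat.cast_sum]
    _ ≤ #(s.image f) • m := sum_le_card_nsmul _ _ _ hm
    _ ≤ m * n := by rw [nsmul_eq_mul']; exact mul_le_mul_of_nonneg_left hn hm₀

theorem Int.card_le_of_pairwise_modEq {m a b : ℤ} (hm : 0 < m) (hab : a ≤ b) {S : Finset ℤ}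
    (hS : ∀ x ∈ S, a ≤ x ∧ x ≤ b) (hmod : ∀ x ∈ S, ∀ y ∈ S, x ≡ y [ZMOD m]) :
    (#S : ℝ) ≤ 1 + ((b : ℝ) - a) / m := by
  set k := (b - a) / m
  have hinj : Set.InjOn (fun x => (x - a) / m) S := fun x hx y hy h => by
    simpa using Int.ext_ediv_modEq h ((hmod x hx y hy).sub_right a)
  have hmaps : ∀ x ∈ S, (x - a) / m ∈ Icc 0 k := fun x hx => mem_Icc.2
    ⟨Int.ediv_nonneg (by linarith [hS x hx]) hm.le, Int.ediv_le_ediv hm (by linarith [hS x hx])⟩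
  have hcard : (#S : ℤ) ≤ k + 1 := by
    have := card_le_card_of_injOn _ hmaps hinj
    rw [Int.card_Icc] at this
    have : 0 ≤ k := Int.ediv_nonneg (by linarith) hm.le
    omega
  have hk : (m : ℝ) * k ≤ b - a := by exact_mod_cast Int.mul_ediv_self_le hm.ne'
  have hm' : (0 : ℝ) < m := by exact_mod_cast hm
  calc (#S : ℝ) ≤ k + 1 := by exact_mod_cast hcard
    _ ≤ 1 + ((b : ℝ) - a) / m := by
      rw [add_comm, add_le_add_iff_left, le_div_iff₀' hm']; exact hk

theorem IsCoprime.card_le_of_forall_mul_sub_mul_eq {r s v M : ℤ} (hcop : IsCoprime r s)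
    (hr : r ≠ 0) (hM : 1 ≤ M) {F : Finset (ℤ × ℤ)}
    (hF : ∀ xy ∈ F, 1 ≤ xy.1 ∧ xy.1 ≤ M ∧ s * xy.1 - r * xy.2 = v) :
    (#F : ℝ) ≤ 1 + ((M : ℝ) - 1) / |(r : ℝ)| := by
  have hinj : Set.InjOn Prod.fst (F : Set (ℤ × ℤ)) := by
    rintro ⟨x, y⟩ hxy ⟨x', y'⟩ hxy' (rfl : x = x')
    have h := (hF _ hxy).2.2.trans (hF _ hxy').2.2.symm
    simp only [Prod.mk.injEq, true_and]
    exact mul_left_cancel₀ hr (by linarith)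
  rw [← card_image_of_injOn hinj, ← Int.cast_abs]
  refine (Int.card_le_of_pairwise_modEq (abs_pos.2 hr) hM ?_ ?_).trans_eq (by rw [Int.cast_one])
  · simp only [mem_image]
    rintro _ ⟨xy, hxy, rfl⟩
    exact ⟨(hF _ hxy).1, (hF _ hxy).2.1⟩
  · simp only [mem_image]
    rintro _ ⟨⟨x, y⟩, hxy, rfl⟩ _ ⟨⟨x', y'⟩, hxy', rfl⟩
    have h := (hF _ hxy).2.2.trans (hF _ hxy').2.2.symm
    have hdvd : r ∣ x' - x := hcop.dvd_of_dvd_mul_left ⟨y' - y, by linear_combination -h⟩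
    exact Int.modEq_iff_dvd.2 ((abs_dvd r _).2 hdvd)

theorem IsCoprime.card_le_of_forall_mul_sub_mul_eq_of_mem_Icc {r s v M : ℤ}
    (hcop : IsCoprime r s) (hr : r ≠ 0) (hs : s ≠ 0) (hM : 1 ≤ M) {F : Finset (ℤ × ℤ)}
    (hF : ∀ xy ∈ F, xy.1 ∈ Icc 1 M ∧ xy.2 ∈ Icc 1 M ∧ s * xy.1 - r * xy.2 = v) :
    (#F : ℝ) ≤ 1 + ((M : ℝ) - 1) / max |(r : ℝ)| |(s : ℝ)| := by
  rcases le_total |(s : ℝ)| |(r : ℝ)| with h | h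
  · rw [max_eq_left h]
    refine hcop.card_le_of_forall_mul_sub_mul_eq hr hM (v := v) fun xy hxy => ?_
    obtain ⟨hx, -, hv⟩ := hF xy hxy
    exact ⟨(mem_Icc.1 hx).1, (mem_Icc.1 hx).2, hv⟩
  · rw [max_eq_right h, ← card_image_of_injective F Prod.swap_injective]
    refine hcop.symm.card_le_of_forall_mul_sub_mul_eq hs hM (v := -v) fun xy hxy => ?_
    obtain ⟨⟨x, y⟩, hmem, rfl⟩ := mem_image.1 hxy
    obtain ⟨-, hy, hv⟩ := hF _ hmem
    refine ⟨(mem_Icc.1 hy).1, (mem_Icc.1 hy).2, ?_⟩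
    simp only [Prod.fst_swap, Prod.snd_swap] at hv ⊢
    linarith

theorem card_image_mul_sub_mul_le {r s c p M : ℤ} (hp : 0 < p) (hM : 0 ≤ M)
    {P : Finset (ℤ × ℤ)}
    (hP : ∀ xy ∈ P, |xy.1| ≤ M ∧ |xy.2| ≤ M ∧ p ∣ s * xy.1 - r * xy.2 - c) :
    (#(P.image fun xy => s * xy.1 - r * xy.2) : ℝ) ≤
      1 + 2 * M * (|(s : ℝ)| + |(r : ℝ)|) / p := by
  set b := (|s| + |r|) * M
  calc _ ≤ 1 + ((b : ℝ) - ((-b : ℤ) : ℝ)) / p :=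
        Int.card_le_of_pairwise_modEq hp (by linarith [show 0 ≤ b by positivity]) ?_ ?_
    _ = _ := by push_cast [b]; ring
  · simp only [mem_image]
    rintro _ ⟨⟨x, y⟩, hxy, rfl⟩
    obtain ⟨hx, hy, -⟩ := hP _ hxy
    have : |s * x - r * y| ≤ b :=
      calc |s * x - r * y| ≤ |s| * |x| + |r| * |y| := by
            simpa only [abs_mul] using abs_sub (s * x) (r * y)
        _ ≤ |s| * M + |r| * M := by gcongr
        _ = b := by ring
    exact abs_le.1 this
  · simp only [mem_image]
    rintro _ ⟨_, hxy, rfl⟩ _ ⟨_, hxy', rfl⟩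
    exact (Int.modEq_iff_dvd.2 (hP _ hxy).2.2).symm.trans (Int.modEq_iff_dvd.2 (hP _ hxy').2.2)

theorem stmt_7_general (p : ℕ) (hp : p.Prime) (r s c : ℤ) (M : ℕ)
    (hM : 1 ≤ M)
    (hr : 1 ≤ |r|) (hs : 1 ≤ s)
    (hcop : IsCoprime r s) :
    ({xy : ℤ × ℤ | 1 ≤ xy.1 ∧ xy.1 ≤ M ∧ 1 ≤ xy.2 ∧ xy.2 ≤ M ∧
        (p : ℤ) ∣ (s * xy.1 - r * xy.2 - c)}.ncard : ℝ)
      ≤ (1 + 2 * M / max (|r| : ℝ) (s : ℝ)) * (1 + 2 * M * ((s : ℝ) + |r|) / p) := by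
  classical
  set P := {xy ∈ Icc (1 : ℤ) M ×ˢ Icc (1 : ℤ) M | (p : ℤ) ∣ s * xy.1 - r * xy.2 - c}
  have hP : {xy : ℤ × ℤ | 1 ≤ xy.1 ∧ xy.1 ≤ M ∧ 1 ≤ xy.2 ∧ xy.2 ≤ M ∧
      (p : ℤ) ∣ (s * xy.1 - r * xy.2 - c)} = ↑P := by
    ext; simp [P, and_assoc]
  have hs_abs : |(s : ℝ)| = s := abs_of_pos (by exact_mod_cast hs)
  rw [hP, Set.ncard_coe_finset]
  refine card_le_mul_of_card_fiber_le P (f := fun xy => s * xy.1 - r * xy.2) (by positivity)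
    (fun w _ => ?_) ?_
  · calc _ ≤ 1 + ((M : ℝ) - 1) / max |(r : ℝ)| |(s : ℝ)| := by
          refine hcop.card_le_of_forall_mul_sub_mul_eq_of_mem_Icc (v := w) (abs_pos.1 (by omega))
            (by omega) (by exact_mod_cast hM) fun xy hxy => ?_
          simp only [P, mem_filter, mem_product] at hxy
          exact ⟨hxy.1.1.1, hxy.1.1.2, hxy.2⟩
      _ ≤ _ := by rw [hs_abs]; gcongr; linarith
  · calc _ ≤ 1 + 2 * M * (|(s : ℝ)| + |(r : ℝ)|) / p := by
          refine card_image_mul_sub_mul_le (c := c) (by exact_mod_cast hp.pos) (by positivity)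
            fun xy hxy => ?_
          simp only [P, mem_filter, mem_product, mem_Icc] at hxy
          obtain ⟨⟨⟨hx₁, hxM⟩, hy₁, hyM⟩, hv⟩ := hxy
          exact ⟨abs_le.2 ⟨by linarith, hxM⟩, abs_le.2 ⟨by linarith, hyM⟩, hv⟩
      _ = _ := by rw [hs_abs]; push_cast; ring

theorem stmt_7 (p : ℕ) (hp : p.Prime) (r s c : ℤ) (M : ℕ)
    (hM : 1 ≤ M) (hMp : M < p)
    (hr : 1 ≤ |r|) (hs : 1 ≤ s)
    (hrb : (|r| : ℝ) ≤ Real.sqrt p) (hsb : (s : ℝ) ≤ Real.sqrt p)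
    (hcop : IsCoprime r s) :
    ({xy : ℤ × ℤ | 1 ≤ xy.1 ∧ xy.1 ≤ M ∧ 1 ≤ xy.2 ∧ xy.2 ≤ M ∧
        (p : ℤ) ∣ (s * xy.1 - r * xy.2 - c)}.ncard : ℝ)
      ≤ (1 + 2 * M / max (|r| : ℝ) (s : ℝ)) * (1 + 2 * M * ((s : ℝ) + |r|) / p) :=
  stmt_7_general p hp r s c M hM hr hs hcop
end
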